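/- arXiv:2506.15141 — 2 statements merged into one kernel-verified Lean document; each statement's English description precedes it below -/
import Mathlib

section
/- For X, Y ∈ ℂ³ define E(X,Y) = 4·Σ_{i=1}^{3}(|XᵢYᵢ|² − Re(Xᵢ²·conj(Yᵢ)²)) + (1/2)(|X₁Y₂|² + |X₂Y₁|²) + (1/2)(|X₂Y₃|² + |X₃Y₂|²) + (1/2)(|X₁Y₃|² + |X₃Y₁|²) + 4Re(X₁·conj(X₂)·conj(Y₁)·Y₂) − 5Re(X₁X₂·conj(Y₁)·conj(Y₂)) + 4Re(X₂·conj(X₃)·conj(Y₂)·Y₃) − 5Re(X₂X₃·conj(Y₂)·conj(Y₃)) − 5Re(X₁·conj(X₃)·conj(Y₁)·Y₃) + 4Re(X₁X₃·conj(Y₁)·conj(Y₃)). Then for all X, Y ∈ ℂ³, writing Iᵢ = Im(Xᵢ·conj(Yᵢ)), one has E(X,Y) = 4(I₁+I₂)² + 4(I₂+I₃)² + 4(I₁−I₃)² + (1/2)|X₁·conj(Y₂) − Y₁·conj(X₂)|² + (1/2)|X₂·conj(Y₃) − Y₂·conj(X₃)|² + (1/2)|X₁Y₃ − Y₁X₃|²;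 in particular E(X,Y) ≥ 0. -/
open Complex

/-- The Riemannian sectional curvature numerator `R_{xyyx}` of the Wallach threefold, in terms
of the `(1,0)`-parts `X, Y ∈ ℂ³` of `x = X + X̄`, `y = Y + Ȳ`. -/
noncomputable def wallachSectional (X Y : Fin 3 → ℂ) : ℝ :=
  4 * (∑ i : Fin 3, ((Norm.norm (X i * Y i)) ^ 2
        - (X i ^ 2 * (starRingEnd ℂ (Y i)) ^ 2).re))
    + (1 / 2) * ((Norm.norm (X 0 * Y 1)) ^ 2 + (Norm.norm (X 1 * Y 0)) ^ 2)
    + (1 / 2) * ((Norm.norm (X 1 * Y 2)) ^ 2 + (Norm.norm (X 2 * Y 1)) ^ 2)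
    + (1 / 2) * ((Norm.norm (X 0 * Y 2)) ^ 2 + (Norm.norm (X 2 * Y 0)) ^ 2)
    + 4 * (X 0 * (starRingEnd ℂ (X 1)) * (starRingEnd ℂ (Y 0)) * Y 1).re
    - 5 * (X 0 * X 1 * (starRingEnd ℂ (Y 0)) * (starRingEnd ℂ (Y 1))).re
    + 4 * (X 1 * (starRingEnd ℂ (X 2)) * (starRingEnd ℂ (Y 1)) * Y 2).re
    - 5 * (X 1 * X 2 * (starRingEnd ℂ (Y 1)) * (starRingEnd ℂ (Y 2))).re
    - 5 * (X 0 * (starRingEnd ℂ (X 2)) * (starRingEnd ℂ (Y 0)) * Y 2).re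
    + 4 * (X 0 * X 2 * (starRingEnd ℂ (Y 0)) * (starRingEnd ℂ (Y 2))).re

/-! With `zᵢ = Xᵢ · conj Yᵢ`, so that `Iᵢ = Im zᵢ`, the quartic terms of `E` are `Re(zᵢ²)`,
`Re(zᵢ z̄ⱼ)` and `Re(zᵢ zⱼ)`. The identities `‖z‖² - Re(z²) = 2 (Im z)²` and
`Re(z w̄) - Re(z w) = 2 Im z Im w` turn the diagonal terms into `8 Iᵢ²` and each pair of coordinates
into one of the Hermitian squares plus `± 8 Iᵢ Iⱼ`; the remaining quadratic form
`8 Σ Iᵢ² + 8 I₁I₂ + 8 I₂I₃ - 8 I₁I₃` is `4 (I₁+I₂)² + 4 (I₂+I₃)² + 4 (I₁-I₃)²`. -/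

open ComplexConjugate

namespace Complex

theorem sq_norm_sub_re_sq (z : ℂ) : ‖z‖ ^ 2 - (z ^ 2).re = 2 * z.im ^ 2 := by
  rw [Complex.sq_norm, normSq_apply, sq z, mul_re]
  ring

theorem re_mul_conj_sub_re_mul (z w : ℂ) : (z * conj w).re - (z * w).re = 2 * z.im * w.im := by
  simp only [mul_re, conj_re, conj_im]
  ring

theorem sq_norm_mul_conj (z w : ℂ) : ‖z * conj w‖ ^ 2 = ‖z * w‖ ^ 2 := by
  rw [norm_mul, norm_mul, norm_conj]

end Complex

open Complex

theorem sq_norm_mul_sub_re_mul_conj_sq (x y : ℂ) :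
    ‖x * y‖ ^ 2 - (x ^ 2 * conj y ^ 2).re = 2 * (x * conj y).im ^ 2 := by
  rw [← sq_norm_mul_conj, ← sq_norm_sub_re_sq, mul_pow]

theorem wallach_adjacent_pair (x y x' y' : ℂ) :
    (1 / 2) * (‖x * y'‖ ^ 2 + ‖x' * y‖ ^ 2)
      + 4 * (x * conj x' * conj y * y').re - 5 * (x * x' * conj y * conj y').re
      = (1 / 2) * ‖x * conj y' - y * conj x'‖ ^ 2
        + 8 * (x * conj y).im * (x' * conj y').im := by
  have hconj : x * conj x' * conj y * y' = x * conj y * conj (x' * conj y') := by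
    rw [map_mul, conj_conj]; ring
  have hmul : x * x' * conj y * conj y' = x * conj y * (x' * conj y') := by ring
  have hsq : ‖x * conj y' - y * conj x'‖ ^ 2
      = ‖x * y'‖ ^ 2 + ‖x' * y‖ ^ 2 - 2 * (x * conj y * (x' * conj y')).re := by
    rw [Complex.sq_norm, normSq_sub, ← Complex.sq_norm, ← Complex.sq_norm, sq_norm_mul_conj,
      sq_norm_mul_conj y, mul_comm y x']
    congr 3
    simp only [map_mul, conj_conj]
    ring
  rw [hconj, hmul, hsq]
  linear_combination 4 * re_mul_conj_sub_re_mul (x * conj y) (x' * conj y')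

theorem wallach_opposite_pair (x y x' y' : ℂ) :
    (1 / 2) * (‖x * y'‖ ^ 2 + ‖x' * y‖ ^ 2)
      - 5 * (x * conj x' * conj y * y').re + 4 * (x * x' * conj y * conj y').re
      = (1 / 2) * ‖x * y' - y * x'‖ ^ 2
        - 8 * (x * conj y).im * (x' * conj y').im := by
  have hconj : x * conj x' * conj y * y' = x * conj y * conj (x' * conj y') := by
    rw [map_mul, conj_conj]; ring
  have hmul : x * x' * conj y * conj y' = x * conj y * (x' * conj y') := by ring
  have hsq : ‖x * y' - y * x'‖ ^ 2
      = ‖x * y'‖ ^ 2 + ‖x' * y‖ ^ 2 - 2 * (x * conj y * conj (x' * conj y')).re := by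
    rw [Complex.sq_norm, normSq_sub, ← Complex.sq_norm, ← Complex.sq_norm, mul_comm y]
    congr 3
    simp only [map_mul, conj_conj]
    ring
  rw [hconj, hmul, hsq]
  linear_combination -4 * re_mul_conj_sub_re_mul (x * conj y) (x' * conj y')

/-- Sum-of-squares identity for the Riemannian sectional curvature of the Wallach threefold;
in particular it is nonnegative. -/
theorem wallach_sectional_sos :
    ∀ X Y : Fin 3 → ℂ,
      wallachSectional X Y
        = 4 * ((X 0 * (starRingEnd ℂ (Y 0))).im + (X 1 * (starRingEnd ℂ (Y 1))).im) ^ 2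
          + 4 * ((X 1 * (starRingEnd ℂ (Y 1))).im + (X 2 * (starRingEnd ℂ (Y 2))).im) ^ 2
          + 4 * ((X 0 * (starRingEnd ℂ (Y 0))).im - (X 2 * (starRingEnd ℂ (Y 2))).im) ^ 2
          + (1 / 2) * (Norm.norm (X 0 * (starRingEnd ℂ (Y 1))
              - Y 0 * (starRingEnd ℂ (X 1)))) ^ 2
          + (1 / 2) * (Norm.norm (X 1 * (starRingEnd ℂ (Y 2))
              - Y 1 * (starRingEnd ℂ (X 2)))) ^ 2
          + (1 / 2) * (Norm.norm (X 0 * Y 2 - Y 0 * X 2)) ^ 2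
      ∧ 0 ≤ wallachSectional X Y := by
  intro X Y
  refine (fun hsos => ⟨hsos, hsos ▸ by positivity⟩) ?_
  rw [wallachSectional, Fin.sum_univ_three]
  linear_combination 4 * sq_norm_mul_sub_re_mul_conj_sq (X 0) (Y 0)
    + 4 * sq_norm_mul_sub_re_mul_conj_sq (X 1) (Y 1)
    + 4 * sq_norm_mul_sub_re_mul_conj_sq (X 2) (Y 2)
    + wallach_adjacent_pair (X 0) (Y 0) (X 1) (Y 1)
    + wallach_adjacent_pair (X 1) (Y 1) (X 2) (Y 2)
    + wallach_opposite_pair (X 0) (Y 0) (X 2) (Y 2)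
end

section
/- Let a > 0 be real, let z ∈ ℂ and t ∈ ℝ with (z,t) ≠ (0,0), and let 𝔤 be a complex Lie algebra admitting a basis (e₁, e₂, e₃, f₁, f₂, f₃) whose only nonzero brackets among basis vectors (up to antisymmetry) are: [e₁,e₂] = z·e₂, [f₁,f₂] = conj(z)·f₂, [e₂,e₃] = −it·e₂, [f₂,f₃] = it·f₂, [e₂,f₃] = −it·e₂, [f₂,e₃] = it·f₂, [e₂,f₁] = conj(z)·e₂, [f₂,e₁] = z·f₂, [e₁,f₁] = a·(e₃ − f₃), [e₂,f₂] = −a·(e₃ − f₃). Then 𝔤 is solvable of derived length exactly 3 (the derived series satisfies 𝔤⁽²⁾ ≠ 0 and 𝔤⁽³⁾ = 0), and 𝔤 is not nilpotent. -/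
/-!
Write `v = e₃ - f₃`. From the brackets, `v` is central, `[𝔤, 𝔤] ⊆ span {e₂, f₂, v}`, and
brackets inside that span land in `ℂ v`; hence `𝔤⁽²⁾ ⊆ ℂ v` is central and `𝔤⁽³⁾ = 0`.
Conversely, `(z, t) ≠ (0, 0)` makes `e₂` and `f₂` eigenvectors of some `ad x` with a non-zero
eigenvalue, so they lie in `[𝔤, 𝔤]` and `𝔤` is not nilpotent; then `[e₂, f₂] = -a v` puts
`v ≠ 0` into `𝔤⁽²⁾`.
-/

open Complex LieAlgebra LieModule

section General

variable {R L : Type*} [CommRing R] [LieRing L] [LieAlgebra R L]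

theorem lie_mem_of_mem_span {s t : Set L} {K : Submodule R L}
    (h : ∀ x ∈ s, ∀ y ∈ t, ⁅x, y⁆ ∈ K) {x y : L}
    (hx : x ∈ Submodule.span R s) (hy : y ∈ Submodule.span R t) : ⁅x, y⁆ ∈ K := by
  induction hx, hy using Submodule.span_induction₂ with
  | mem_mem x y hx hy => exact h x hx y hy
  | zero_left => simp
  | zero_right => simp
  | add_left _ _ _ _ _ _ h₁ h₂ => rw [add_lie]; exact add_mem h₁ h₂
  | add_right _ _ _ _ _ _ h₁ h₂ => rw [lie_add]; exact add_mem h₁ h₂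
  | smul_left r _ _ _ _ h => rw [smul_lie]; exact K.smul_mem r h
  | smul_right r _ _ _ _ h => rw [lie_smul]; exact K.smul_mem r h

theorem lie_mem_of_basis {ι : Type*} [LinearOrder ι] (b : Module.Basis ι R L)
    {K : Submodule R L} (h : ∀ i j, i < j → ⁅b i, b j⁆ ∈ K) (x y : L) : ⁅x, y⁆ ∈ K := by
  refine lie_mem_of_mem_span ?_ (b.mem_span x) (b.mem_span y)
  rintro _ ⟨i, rfl⟩ _ ⟨j, rfl⟩
  rcases lt_trichotomy i j with hij | rfl | hji
  · exact h i j hij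
  · rw [lie_self]; exact K.zero_mem
  · rw [← lie_skew]; exact K.neg_mem (h j i hji)

theorem LieSubmodule.toSubmodule_lie_le_iff {I J : LieIdeal R L} {K : Submodule R L} :
    (⁅I, J⁆ : LieIdeal R L).toSubmodule ≤ K ↔ ∀ x ∈ I, ∀ y ∈ J, ⁅x, y⁆ ∈ K := by
  rw [LieSubmodule.lieIdeal_oper_eq_linear_span, Submodule.span_le]
  constructor
  · exact fun h x hx y hy => h ⟨⟨x, hx⟩, ⟨y, hy⟩, rfl⟩
  · rintro h _ ⟨x, y, rfl⟩
    exact h x x.2 y y.2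

theorem derivedSeries_succ_eq_bot_of_le_center {k : ℕ}
    (h : derivedSeries R L k ≤ center R L) : derivedSeries R L (k + 1) = ⊥ := by
  rw [derivedSeries_def, derivedSeriesOfIdeal_succ, LieSubmodule.lie_eq_bot_iff]
  exact fun x _ y hy => (mem_maxTrivSubmodule R L L _).1 (h hy) x

end General

section Field

variable {K L : Type*} [Field K] [LieRing L] [LieAlgebra K L]

theorem mem_lie_of_lie_eq_smul {I J : LieIdeal K L} {x y w : L} {c : K} (hc : c ≠ 0)
    (h : ⁅x, y⁆ = c • w) (hx : x ∈ I) (hy : y ∈ J) : w ∈ ⁅I, J⁆ := by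
  have hxy := LieSubmodule.lie_mem_lie hx hy
  rw [h] at hxy
  simpa [hc] using ⁅I, J⁆.smul_mem c⁻¹ hxy

theorem not_isNilpotent_of_lie_eq_smul {x w : L} {c : K} (hc : c ≠ 0) (hw : w ≠ 0)
    (h : ⁅x, w⁆ = c • w) : ¬ LieRing.IsNilpotent L := by
  intro hL
  have hev : (toEnd K L L x).HasEigenvalue c := Module.End.hasEigenvalue_of_hasEigenvector
    (Module.End.hasEigenvector_iff.2 ⟨Module.End.mem_eigenspace_iff.2 h, hw⟩)
  exact hc (hev.isNilpotent_of_isNilpotent (isNilpotent_toEnd_of_isNilpotent K L L x)).eq_zero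

end Field

/-- The brackets of `B_{z,t}`, with `b 0, …, b 5` standing for `e₁, e₂, e₃, f₁, f₂, f₃`. -/
structure IsBztBasis (a : ℝ) (z : ℂ) (t : ℝ) {L : Type*} [LieRing L] [LieAlgebra ℂ L]
    (b : Module.Basis (Fin 6) ℂ L) : Prop where
  h01 : ⁅b 0, b 1⁆ = z • b 1
  h02 : ⁅b 0, b 2⁆ = 0
  h03 : ⁅b 0, b 3⁆ = (a : ℂ) • (b 2 - b 5)
  h04 : ⁅b 0, b 4⁆ = -(z • b 4)
  h05 : ⁅b 0, b 5⁆ = 0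
  h12 : ⁅b 1, b 2⁆ = (-(Complex.I * (t : ℂ))) • b 1
  h13 : ⁅b 1, b 3⁆ = (starRingEnd ℂ z) • b 1
  h14 : ⁅b 1, b 4⁆ = (-(a : ℂ)) • (b 2 - b 5)
  h15 : ⁅b 1, b 5⁆ = (-(Complex.I * (t : ℂ))) • b 1
  h23 : ⁅b 2, b 3⁆ = 0
  h24 : ⁅b 2, b 4⁆ = -((Complex.I * (t : ℂ)) • b 4)
  h25 : ⁅b 2, b 5⁆ = 0
  h34 : ⁅b 3, b 4⁆ = (starRingEnd ℂ z) • b 4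
  h35 : ⁅b 3, b 5⁆ = 0
  h45 : ⁅b 4, b 5⁆ = (Complex.I * (t : ℂ)) • b 4

namespace IsBztBasis

variable {a : ℝ} {z : ℂ} {t : ℝ} {L : Type*} [LieRing L] [LieAlgebra ℂ L]
  {b : Module.Basis (Fin 6) ℂ L}

theorem sub_mem_center (hb : IsBztBasis a z t b) : b 2 - b 5 ∈ center ℂ L := by
  have hbv : ∀ i, ⁅b i, b 2 - b 5⁆ = 0 := by
    intro i
    fin_cases i <;> simp [lie_sub, hb.h02, hb.h05, hb.h12, hb.h15, hb.h25, hb.h35, hb.h45,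
      ← lie_skew (b 3) (b 2), hb.h23, ← lie_skew (b 4) (b 2), hb.h24, ← lie_skew (b 5) (b 2)]
  refine (mem_maxTrivSubmodule ℂ L L _).2 fun x => ?_
  simpa using lie_mem_of_mem_span (K := ⊥) (s := Set.range b) (t := {b 2 - b 5})
    (by rintro _ ⟨i, rfl⟩ _ rfl; simp [hbv]) (b.mem_span x) (Submodule.mem_span_singleton_self _)

theorem lie_mem_span (hb : IsBztBasis a z t b) (x y : L) :
    ⁅x, y⁆ ∈ Submodule.span ℂ {b 1, b 4, b 2 - b 5} := by
  refine lie_mem_of_basis b (fun i j hij => ?_) x y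
  fin_cases i <;> fin_cases j <;> try exact absurd hij (by decide)
  all_goals
    simp only [Fin.reduceFinMk, hb.h01, hb.h02, hb.h03, hb.h04, hb.h05, hb.h12, hb.h13, hb.h14,
      hb.h15, hb.h23, hb.h24, hb.h25, hb.h34, hb.h35, hb.h45]
  all_goals first
    | exact zero_mem _
    | exact Submodule.smul_mem _ _ (Submodule.subset_span (by simp))
    | exact neg_mem (Submodule.smul_mem _ _ (Submodule.subset_span (by simp)))

theorem lie_mem_span_sub_of_mem_span (hb : IsBztBasis a z t b) {x y : L}
    (hx : x ∈ Submodule.span ℂ {b 1, b 4, b 2 - b 5})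
    (hy : y ∈ Submodule.span ℂ {b 1, b 4, b 2 - b 5}) :
    ⁅x, y⁆ ∈ Submodule.span ℂ {b 2 - b 5} := by
  have hv := (mem_maxTrivSubmodule ℂ L L _).1 hb.sub_mem_center
  refine lie_mem_of_mem_span (fun u hu w hw => ?_) hx hy
  simp only [Set.mem_insert_iff, Set.mem_singleton_iff] at hu hw
  rcases hu with rfl | rfl | rfl <;> rcases hw with rfl | rfl | rfl <;>
    simp only [lie_self, hv, ← lie_skew (b 2 - b 5) _, hb.h14, ← lie_skew (b 4) (b 1), neg_zero,
      zero_mem, neg_mem_iff, Submodule.smul_mem _ _ (Submodule.mem_span_singleton_self _)]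

theorem derivedSeries_two_le_center (hb : IsBztBasis a z t b) :
    derivedSeries ℂ L 2 ≤ center ℂ L := by
  have h1 : (derivedSeries ℂ L 1).toSubmodule ≤ Submodule.span ℂ {b 1, b 4, b 2 - b 5} := by
    rw [derivedSeries_def, derivedSeriesOfIdeal_succ, LieSubmodule.toSubmodule_lie_le_iff]
    exact fun x _ y _ => hb.lie_mem_span x y
  have h2 : (derivedSeries ℂ L 2).toSubmodule ≤ Submodule.span ℂ {b 2 - b 5} := by
    rw [derivedSeries_def, derivedSeriesOfIdeal_succ ℂ L ⊤ 1, LieSubmodule.toSubmodule_lie_le_iff]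
    exact fun x hx y hy => hb.lie_mem_span_sub_of_mem_span (h1 hx) (h1 hy)
  exact fun x hx => (Submodule.span_singleton_le_iff_mem _ _).2 hb.sub_mem_center (h2 hx)

theorem basis_one_mem_derivedSeries_one (hb : IsBztBasis a z t b) (hzt : z ≠ 0 ∨ t ≠ 0) :
    b 1 ∈ derivedSeries ℂ L 1 := by
  rw [derivedSeries_def, derivedSeriesOfIdeal_succ, derivedSeriesOfIdeal_zero]
  rcases hzt with hz | ht
  · exact mem_lie_of_lie_eq_smul hz hb.h01 trivial trivial
  · exact mem_lie_of_lie_eq_smul (by simpa using ht) hb.h12 trivial trivial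

theorem basis_four_mem_derivedSeries_one (hb : IsBztBasis a z t b) (hzt : z ≠ 0 ∨ t ≠ 0) :
    b 4 ∈ derivedSeries ℂ L 1 := by
  rw [derivedSeries_def, derivedSeriesOfIdeal_succ, derivedSeriesOfIdeal_zero]
  rcases hzt with hz | ht
  · exact mem_lie_of_lie_eq_smul (neg_ne_zero.2 hz) (by rw [hb.h04, neg_smul]) trivial trivial
  · exact mem_lie_of_lie_eq_smul (by simpa using ht) hb.h45 trivial trivial

theorem sub_mem_derivedSeries_two (hb : IsBztBasis a z t b) (ha : a ≠ 0) (hzt : z ≠ 0 ∨ t ≠ 0) :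
    b 2 - b 5 ∈ derivedSeries ℂ L 2 := by
  rw [derivedSeries_def, derivedSeriesOfIdeal_succ ℂ L ⊤ 1, ← derivedSeries_def]
  exact mem_lie_of_lie_eq_smul (by simpa using ha) hb.h14
    (hb.basis_one_mem_derivedSeries_one hzt) (hb.basis_four_mem_derivedSeries_one hzt)

theorem not_isNilpotent (hb : IsBztBasis a z t b) (hzt : z ≠ 0 ∨ t ≠ 0) :
    ¬ LieRing.IsNilpotent L := by
  rcases hzt with hz | ht
  · exact not_isNilpotent_of_lie_eq_smul hz (b.ne_zero 1) hb.h01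
  · exact not_isNilpotent_of_lie_eq_smul (c := -(I * t)) (by simpa using ht) (b.ne_zero 4)
      (by rw [hb.h24, neg_smul])

end IsBztBasis

/-- The complexified Lie algebra `B_{z,t}` (the second family of balanced BTP Lie-Hermitian
threefolds of middle type), for `(z,t) ≠ (0,0)`, is solvable of derived length exactly 3 and
is not nilpotent.  Here `e₁,e₂,e₃` correspond to `b 0, b 1, b 2` and `fᵢ = conj(eᵢ)` to
`b 3, b 4, b 5`; the listed hypotheses record all brackets among basis vectors (up to
antisymmetry), the unlisted pairs bracketing to zero. -/
theorem Bzt_three_step_solvable (a : ℝ) (ha : 0 < a) (z : ℂ) (t : ℝ) (hzt : (z, t) ≠ (0, 0))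
    (L : Type*) [LieRing L] [LieAlgebra ℂ L] (b : Module.Basis (Fin 6) ℂ L)
    (h01 : ⁅b 0, b 1⁆ = z • b 1)
    (h02 : ⁅b 0, b 2⁆ = 0)
    (h03 : ⁅b 0, b 3⁆ = (a : ℂ) • (b 2 - b 5))
    (h04 : ⁅b 0, b 4⁆ = -(z • b 4))
    (h05 : ⁅b 0, b 5⁆ = 0)
    (h12 : ⁅b 1, b 2⁆ = (-(Complex.I * (t : ℂ))) • b 1)
    (h13 : ⁅b 1, b 3⁆ = (starRingEnd ℂ z) • b 1)
    (h14 : ⁅b 1, b 4⁆ = (-(a : ℂ)) • (b 2 - b 5))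
    (h15 : ⁅b 1, b 5⁆ = (-(Complex.I * (t : ℂ))) • b 1)
    (h23 : ⁅b 2, b 3⁆ = 0)
    (h24 : ⁅b 2, b 4⁆ = -((Complex.I * (t : ℂ)) • b 4))
    (h25 : ⁅b 2, b 5⁆ = 0)
    (h34 : ⁅b 3, b 4⁆ = (starRingEnd ℂ z) • b 4)
    (h35 : ⁅b 3, b 5⁆ = 0)
    (h45 : ⁅b 4, b 5⁆ = (Complex.I * (t : ℂ)) • b 4) :
    (LieAlgebra.derivedSeries ℂ L 2 ≠ ⊥ ∧ LieAlgebra.derivedSeries ℂ L 3 = ⊥)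
      ∧ ¬ LieRing.IsNilpotent L := by
  have hb : IsBztBasis a z t b :=
    ⟨h01, h02, h03, h04, h05, h12, h13, h14, h15, h23, h24, h25, h34, h35, h45⟩
  have hzt' : z ≠ 0 ∨ t ≠ 0 := not_and_or.1 fun h => hzt (Prod.ext h.1 h.2)
  have hv : b 2 - b 5 ≠ 0 := sub_ne_zero.2 (b.injective.ne (by decide))
  refine ⟨⟨?_, derivedSeries_succ_eq_bot_of_le_center hb.derivedSeries_two_le_center⟩,
    hb.not_isNilpotent hzt'⟩
  intro h
  exact hv ((LieSubmodule.mem_bot _).1 (h ▸ hb.sub_mem_derivedSeries_two ha.ne' hzt'))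
end
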